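/- (Liouville-space quantum speed limit, Eq. (F)) Let T > 0 and let t ↦ ρ_t, t ∈ [0,T], be a continuously differentiable family of nonzero Hermitian positive semidefinite d×d matrices satisfying ρ̇_t = 𝓛_t(ρ_t) for continuous linear maps 𝓛_t, and let ρ̃_t := ρ_t/‖ρ_t‖_HS. Then the Liouville-space angle between the endpoints is bounded by the time-integrated Liouvillian fluctuation: arccos( tr(ρ̃_0 ρ̃_T) ) ≤ ∫₀ᵀ Δ𝓛_t dt, where (Δ𝓛_t)² := ‖𝓛_t ρ̃_t‖²_HS − |⟨ρ̃_t, 𝓛_t ρ̃_t⟩|². -/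

import Mathlib

/-!
In the Hilbert–Schmidt space, `ρ̃ₜ` is a curve on the unit sphere whose velocity is the component
of `𝓛ₜ ρ̃ₜ` orthogonal to `ρ̃ₜ`; since `ρₜ` and `ρ̇ₜ` are Hermitian, `⟨ρ̃ₜ, 𝓛ₜ ρ̃ₜ⟩` is real and
that velocity has norm exactly `Δ𝓛ₜ`. The angle between the endpoints of a curve on the sphere is
at most its length: `g t = Re ⟨ρ̃₀, ρ̃ₜ⟩` satisfies `|ġ| ≤ √(1 - g²) ‖dρ̃ₜ/dt‖`, so `arccos ∘ g`
grows no faster than the arc length.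
-/

open Matrix
open scoped ComplexOrder

noncomputable section

/-- A density matrix: Hermitian, positive semidefinite, trace one. -/
def IsDensityMatrix {d : ℕ} (ρ : Matrix (Fin d) (Fin d) ℂ) : Prop :=
  ρ.IsHermitian ∧ ρ.PosSemidef ∧ ρ.trace = 1

/-- The real part `(ρ + ρᵀ)/2` of a matrix. -/
def reM {d : ℕ} (ρ : Matrix (Fin d) (Fin d) ℂ) : Matrix (Fin d) (Fin d) ℂ :=
  (2⁻¹ : ℂ) • (ρ + ρᵀ)

/-- The imaginary part `(ρ - ρᵀ)/(2i)` of a matrix. -/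
def imM {d : ℕ} (ρ : Matrix (Fin d) (Fin d) ℂ) : Matrix (Fin d) (Fin d) ℂ :=
  (2 * Complex.I)⁻¹ • (ρ - ρᵀ)

/-- The Hilbert–Schmidt norm `√(tr (Aᴴ A))`. -/
def hsNorm {d : ℕ} (A : Matrix (Fin d) (Fin d) ℂ) : ℝ :=
  Real.sqrt ((Aᴴ * A).trace.re)

/-- The square root of a positive semidefinite matrix (removed from Mathlib; old definition). -/
def Matrix.PosSemidef.sqrt {d : ℕ} {A : Matrix (Fin d) (Fin d) ℂ} (hA : A.PosSemidef) :
    Matrix (Fin d) (Fin d) ℂ :=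
  hA.1.eigenvectorUnitary.1 * diagonal ((↑) ∘ (√·) ∘ hA.1.eigenvalues) *
    (star hA.1.eigenvectorUnitary : Matrix (Fin d) (Fin d) ℂ)

/-- The trace norm `tr √(Aᴴ A)`. -/
def traceNorm {d : ℕ} (A : Matrix (Fin d) (Fin d) ℂ) : ℝ :=
  ((Matrix.posSemidef_conjTranspose_mul_self A).sqrt.trace).re

/-- Matrix logarithm via the continuous functional calculus (on Hermitian matrices). -/
def matLog {d : ℕ} (A : Matrix (Fin d) (Fin d) ℂ) : Matrix (Fin d) (Fin d) ℂ :=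
  cfc Real.log A

open scoped Classical in
/-- The positive semidefinite square root of a positive semidefinite matrix
(junk value `0` otherwise). -/
def msqrt {d : ℕ} (A : Matrix (Fin d) (Fin d) ℂ) : Matrix (Fin d) (Fin d) ℂ :=
  if h : A.PosSemidef then h.sqrt else 0

/-- The von Neumann entropy `S(ρ) = -tr(ρ log ρ)`. -/
def vnEntropy {d : ℕ} (ρ : Matrix (Fin d) (Fin d) ℂ) : ℝ :=
  -((ρ * matLog ρ).trace.re)

/-- The relative entropy of imaginarity `M_r(ρ) = S(Re ρ) - S(ρ)`. -/
def Mr {d : ℕ} (ρ : Matrix (Fin d) (Fin d) ℂ) : ℝ :=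
  vnEntropy (reM ρ) - vnEntropy ρ

/-- The root fidelity `tr √(√ρ σ √ρ)`. -/
def rootFid {d : ℕ} (ρ σ : Matrix (Fin d) (Fin d) ℂ) : ℝ :=
  ((msqrt (msqrt ρ * σ * msqrt ρ)).trace).re

/-- The geometric imaginarity `M_g(ρ) = (1 - √F(ρ, ρᵀ))/2`. -/
def Mg {d : ℕ} (ρ : Matrix (Fin d) (Fin d) ℂ) : ℝ :=
  (1 - rootFid ρ ρᵀ) / 2

/-- The Hilbert–Schmidt inner product `⟨A, B⟩ = tr(Aᴴ B)`. -/
def hsInner {d : ℕ} (A B : Matrix (Fin d) (Fin d) ℂ) : ℂ :=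
  (Aᴴ * B).trace

/-- The operator norm of a map on matrices induced by the Hilbert–Schmidt norm. -/
def opNormHS {d : ℕ} (L : Matrix (Fin d) (Fin d) ℂ → Matrix (Fin d) (Fin d) ℂ) : ℝ :=
  sSup {x : ℝ | ∃ ψ, hsNorm ψ = 1 ∧ x = hsNorm (L ψ)}

/-- The Liouville-space normalized vector `ρ̃ = ρ / ‖ρ‖_HS`. -/
def hsNormalize {d : ℕ} (A : Matrix (Fin d) (Fin d) ℂ) : Matrix (Fin d) (Fin d) ℂ :=
  ((hsNorm A : ℂ))⁻¹ • A

/-- The fluctuation `Δ𝓛 = √(‖𝓛ψ‖² - |⟨ψ, 𝓛ψ⟩|²)` of a superoperator at a unit vector. -/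
def fluct {d : ℕ} (L : Matrix (Fin d) (Fin d) ℂ → Matrix (Fin d) (Fin d) ℂ)
    (ψ : Matrix (Fin d) (Fin d) ℂ) : ℝ :=
  Real.sqrt ((hsNorm (L ψ)) ^ 2 - (‖hsInner ψ (L ψ)‖) ^ 2)

open Real Set Filter Topology MeasureTheory
open scoped InnerProductSpace

theorem arcsin_inv_sub_arcsin_div_le_integral {g g' m : ℝ → ℝ} {a b c : ℝ} (hab : a ≤ b)
    (hc : 1 < c) (hga : g a = 1) (hcont : ContinuousOn g (Icc a b))
    (hderiv : ∀ t ∈ Ioo a b, HasDerivAt g (g' t) t) (hg : ∀ t ∈ Ioo a b, |g t| ≤ 1)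
    (hm : ∀ t ∈ Ioo a b, 0 ≤ m t) (hbound : ∀ t ∈ Ioo a b, -g' t ≤ √(1 - g t ^ 2) * m t)
    (hint : IntegrableOn m (Icc a b)) :
    arcsin (1 / c) - arcsin (g b / c) ≤ ∫ t in a..b, m t := by
  have hc0 : 0 < c := one_pos.trans hc
  have hlt : ∀ t ∈ Ioo a b, |g t / c| < 1 := fun t ht => by
    rw [abs_div, abs_of_pos hc0, div_lt_one hc0]
    exact (hg t ht).trans_lt hc
  have hderiv_c : ∀ t ∈ Ioo a b, HasDerivAt (fun s => -arcsin (g s / c))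
      (-(1 / √(1 - (g t / c) ^ 2) * (g' t / c))) t := by
    intro t ht
    exact ((hasDerivAt_arcsin (abs_lt.1 (hlt t ht)).1.ne' (abs_lt.1 (hlt t ht)).2.ne).comp t
      ((hderiv t ht).div_const c)).neg
  have hle : ∀ t ∈ Ioo a b, -(1 / √(1 - (g t / c) ^ 2) * (g' t / c)) ≤ m t := by
    intro t ht
    have hgc : (g t / c) ^ 2 ≤ g t ^ 2 := by
      rw [div_pow]
      exact div_le_self (sq_nonneg _) (one_le_pow₀ hc.le)
    have hs : 0 < √(1 - (g t / c) ^ 2) :=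
      sqrt_pos.2 (sub_pos.2 ((sq_lt_one_iff_abs_lt_one _).2 (hlt t ht)))
    calc -(1 / √(1 - (g t / c) ^ 2) * (g' t / c)) = -g' t / (c * √(1 - (g t / c) ^ 2)) := by
          field_simp
      _ ≤ m t := by
        rw [div_le_iff₀ (mul_pos hc0 hs)]
        calc -g' t ≤ √(1 - g t ^ 2) * m t := hbound t ht
          _ ≤ √(1 - (g t / c) ^ 2) * m t := by gcongr; exact hm t ht
          _ ≤ c * √(1 - (g t / c) ^ 2) * m t := by
              gcongr
              · exact hm t ht
              · exact le_mul_of_one_le_left hs.le hc.le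
          _ = m t * (c * √(1 - (g t / c) ^ 2)) := by ring
  have hftc : -arcsin (g b / c) - -arcsin (g a / c) ≤ ∫ t in a..b, m t :=
    intervalIntegral.sub_le_integral_of_hasDeriv_right_of_le hab
      (continuous_arcsin.comp_continuousOn (hcont.div_const c)).neg
      (fun t ht => (hderiv_c t ht).hasDerivWithinAt) hint hle
  rw [hga] at hftc
  linarith

-- `arccos ∘ g` need not be differentiable where `g = 1`; the functions
-- `arcsin (1 / c) - arcsin (g / c)`, `c > 1`, are, and they tend to `arccos ∘ g` as `c → 1`.
theorem arccos_le_integral_of_neg_deriv_le {g g' m : ℝ → ℝ} {a b : ℝ} (hab : a ≤ b)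
    (hga : g a = 1) (hcont : ContinuousOn g (Icc a b))
    (hderiv : ∀ t ∈ Ioo a b, HasDerivAt g (g' t) t) (hg : ∀ t ∈ Ioo a b, |g t| ≤ 1)
    (hm : ∀ t ∈ Ioo a b, 0 ≤ m t) (hbound : ∀ t ∈ Ioo a b, -g' t ≤ √(1 - g t ^ 2) * m t)
    (hint : IntegrableOn m (Icc a b)) :
    arccos (g b) ≤ ∫ t in a..b, m t := by
  have hlim : Tendsto (fun c : ℝ => arcsin (1 / c) - arcsin (g b / c)) (𝓝[>] 1)
      (𝓝 (arccos (g b))) := by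
    have hcont1 : ContinuousAt (fun c : ℝ => arcsin (1 / c) - arcsin (g b / c)) 1 := by
      fun_prop (disch := norm_num)
    simpa [arccos_eq_pi_div_two_sub_arcsin] using hcont1.tendsto.mono_left nhdsWithin_le_nhds
  exact le_of_tendsto hlim (eventually_nhdsWithin_of_forall fun c hc =>
    arcsin_inv_sub_arcsin_div_le_integral hab hc hga hcont hderiv hg hm hbound hint)

section InnerProductSpace

variable {F : Type*} [NormedAddCommGroup F] [InnerProductSpace ℝ F]

theorem norm_sub_inner_smul_sq {u : F} (hu : ‖u‖ = 1) (y : F) :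
    ‖y - ⟪u, y⟫_ℝ • u‖ ^ 2 = ‖y‖ ^ 2 - ⟪u, y⟫_ℝ ^ 2 := by
  rw [norm_sub_sq_real, real_inner_smul_right, norm_smul, hu, real_inner_comm, Real.norm_eq_abs,
    mul_one, sq_abs]
  ring

theorem abs_real_inner_le_sqrt_mul_norm {u v w : F} (hu : ‖u‖ = 1) (hv : ‖v‖ = 1)
    (huw : ⟪u, w⟫_ℝ = 0) : |⟪v, w⟫_ℝ| ≤ √(1 - ⟪u, v⟫_ℝ ^ 2) * ‖w‖ := by
  have hproj : ⟪v - ⟪u, v⟫_ℝ • u, w⟫_ℝ = ⟪v, w⟫_ℝ := by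
    rw [inner_sub_left, real_inner_smul_left, huw, mul_zero, sub_zero]
  have hnorm : ‖v - ⟪u, v⟫_ℝ • u‖ = √(1 - ⟪u, v⟫_ℝ ^ 2) := by
    rw [← sqrt_sq (norm_nonneg (v - _)), norm_sub_inner_smul_sq hu, hv, one_pow]
  rw [← hproj, ← hnorm]
  exact abs_real_inner_le_norm _ _

theorem inner_eq_zero_of_hasDerivAt_of_norm_eventually_eq {u : ℝ → F} {u' : F} {t c : ℝ}
    (hu : ∀ᶠ x in 𝓝 t, ‖u x‖ = c) (hderiv : HasDerivAt u u' t) : ⟪u t, u'⟫_ℝ = 0 := by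
  have hconst : HasDerivAt (‖u ·‖ ^ 2) 0 t :=
    (hasDerivAt_const t (c ^ 2)).congr_of_eventuallyEq (hu.mono fun x hx => by simp [hx])
  linarith [hderiv.norm_sq.unique hconst]

theorem arccos_inner_le_integral_norm_deriv {u u' : ℝ → F} {a b : ℝ} (hab : a ≤ b)
    (hu : ∀ t ∈ Icc a b, ‖u t‖ = 1) (hcont : ContinuousOn u (Icc a b))
    (hderiv : ∀ t ∈ Ioo a b, HasDerivAt u (u' t) t)
    (hint : IntegrableOn (fun t => ‖u' t‖) (Icc a b)) :
    arccos ⟪u a, u b⟫_ℝ ≤ ∫ t in a..b, ‖u' t‖ := by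
  have ha : a ∈ Icc a b := left_mem_Icc.2 hab
  refine arccos_le_integral_of_neg_deriv_le hab (g := fun t => ⟪u a, u t⟫_ℝ)
    (g' := fun t => ⟪u a, u' t⟫_ℝ) (m := fun t => ‖u' t‖) ?_
    (continuousOn_const.inner hcont) (fun t ht => ?_) (fun t ht => ?_)
    (fun t _ => norm_nonneg _) (fun t ht => ?_) hint
  · rw [real_inner_self_eq_norm_sq, hu a ha, one_pow]
  · simpa using (hasDerivAt_const t (u a)).inner ℝ (hderiv t ht)
  · simpa [hu a ha, hu t (Ioo_subset_Icc_self ht)] using abs_real_inner_le_norm (u a) (u t)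
  · have horth : ⟪u t, u' t⟫_ℝ = 0 := inner_eq_zero_of_hasDerivAt_of_norm_eventually_eq
      (eventually_of_mem (Ioo_mem_nhds ht.1 ht.2) fun x hx => hu x (Ioo_subset_Icc_self hx))
      (hderiv t ht)
    have := abs_real_inner_le_sqrt_mul_norm (hu t (Ioo_subset_Icc_self ht)) (hu a ha) horth
    rw [real_inner_comm (u a)] at this
    exact (neg_le_abs _).trans this

theorem HasDerivAt.norm_inv_smul {r : ℝ → F} {r' : F} {t : ℝ} (hr : HasDerivAt r r' t)
    (h0 : r t ≠ 0) :
    HasDerivAt (fun s => ‖r s‖⁻¹ • r s)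
      (‖r t‖⁻¹ • r' - ⟪‖r t‖⁻¹ • r t, ‖r t‖⁻¹ • r'⟫_ℝ • ‖r t‖⁻¹ • r t) t := by
  have hn : ‖r t‖ ≠ 0 := norm_ne_zero_iff.2 h0
  have hnorm : HasDerivAt (‖r ·‖) (⟪r t, r'⟫_ℝ / ‖r t‖) t := by
    have := hr.norm_sq.sqrt (by positivity)
    simp only [sqrt_sq (norm_nonneg _)] at this
    convert this using 1
    field_simp
  refine ((hnorm.inv hn).smul hr).congr_deriv ?_
  rw [real_inner_smul_left, real_inner_smul_right, smul_smul, Pi.inv_apply]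
  match_scalars <;> field_simp

theorem arccos_inner_normalize_le_integral {r r' : ℝ → F} {a b : ℝ} (hab : a ≤ b)
    (hne : ∀ t ∈ Icc a b, r t ≠ 0) (hcont : ContinuousOn r (Icc a b))
    (hderiv : ∀ t ∈ Ioo a b, HasDerivAt r (r' t) t) (hcont' : ContinuousOn r' (Icc a b)) :
    arccos ⟪‖r a‖⁻¹ • r a, ‖r b‖⁻¹ • r b⟫_ℝ ≤
      ∫ t in a..b, √(‖‖r t‖⁻¹ • r' t‖ ^ 2 - ⟪‖r t‖⁻¹ • r t, ‖r t‖⁻¹ • r' t⟫_ℝ ^ 2) := by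
  set u := fun t => ‖r t‖⁻¹ • r t
  set y := fun t => ‖r t‖⁻¹ • r' t
  have hu : ∀ t ∈ Icc a b, ‖u t‖ = 1 := fun t ht => norm_smul_inv_norm (hne t ht)
  have hinv : ContinuousOn (fun t => ‖r t‖⁻¹) (Icc a b) :=
    hcont.norm.inv₀ fun t ht => norm_ne_zero_iff.2 (hne t ht)
  have hucont : ContinuousOn u (Icc a b) := hinv.smul hcont
  have hycont : ContinuousOn y (Icc a b) := hinv.smul hcont'
  have key := arccos_inner_le_integral_norm_deriv hab hu hucont
    (u' := fun t => y t - ⟪u t, y t⟫_ℝ • u t)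
    (fun t ht => (hderiv t ht).norm_inv_smul (hne t (Ioo_subset_Icc_self ht)))
    ((hycont.sub ((hucont.inner hycont).smul hucont)).norm.integrableOn_Icc)
  refine key.trans_eq (intervalIntegral.integral_congr fun t ht => ?_)
  rw [uIcc_of_le hab] at ht
  rw [← norm_sub_inner_smul_sq (hu t ht), sqrt_sq (norm_nonneg _)]

end InnerProductSpace

section Liouville

variable {d : ℕ}

def toLiouville (A : Matrix (Fin d) (Fin d) ℂ) : EuclideanSpace ℂ (Fin d × Fin d) :=
  WithLp.toLp 2 fun p => A p.1 p.2

theorem inner_toLiouville (A B : Matrix (Fin d) (Fin d) ℂ) :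
    ⟪toLiouville A, toLiouville B⟫_ℂ = hsInner A B := by
  simp only [toLiouville, hsInner, PiLp.inner_apply, RCLike.inner_apply, Fintype.sum_prod_type,
    trace, diag, mul_apply, conjTranspose_apply]
  rw [Finset.sum_comm]
  exact Finset.sum_congr rfl fun _ _ => Finset.sum_congr rfl fun _ _ => mul_comm _ _

theorem real_inner_toLiouville (A B : Matrix (Fin d) (Fin d) ℂ) :
    ⟪toLiouville A, toLiouville B⟫_ℝ = (hsInner A B).re := by
  rw [← inner_toLiouville]
  simp [PiLp.inner_apply]

theorem norm_toLiouville (A : Matrix (Fin d) (Fin d) ℂ) : ‖toLiouville A‖ = hsNorm A := by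
  rw [hsNorm, ← hsInner, ← real_inner_toLiouville, real_inner_self_eq_norm_sq,
    sqrt_sq (norm_nonneg _)]

theorem toLiouville_eq_zero_iff {A : Matrix (Fin d) (Fin d) ℂ} : toLiouville A = 0 ↔ A = 0 := by
  simp [toLiouville, funext_iff, ← Matrix.ext_iff]

theorem toLiouville_inv_hsNorm_smul (A B : Matrix (Fin d) (Fin d) ℂ) :
    toLiouville ((hsNorm A : ℂ)⁻¹ • B) = ‖toLiouville A‖⁻¹ • toLiouville B := by
  rw [norm_toLiouville, ← Complex.ofReal_inv, ← Complex.coe_smul]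
  rfl

theorem toLiouville_hsNormalize (A : Matrix (Fin d) (Fin d) ℂ) :
    toLiouville (hsNormalize A) = ‖toLiouville A‖⁻¹ • toLiouville A :=
  toLiouville_inv_hsNorm_smul A A

theorem hasDerivAt_toLiouville {ρ : ℝ → Matrix (Fin d) (Fin d) ℂ} {ρ' : Matrix (Fin d) (Fin d) ℂ}
    {t : ℝ} (h : ∀ i j, HasDerivAt (fun s => ρ s i j) (ρ' i j) t) :
    HasDerivAt (fun s => toLiouville (ρ s)) (toLiouville ρ') t :=
  (PiLp.continuousLinearEquiv 2 ℝ (fun _ : Fin d × Fin d => ℂ)).symm.hasFDerivAt.comp_hasDerivAt t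
    (hasDerivAt_pi.2 fun p => h p.1 p.2)

theorem continuousOn_toLiouville {ρ : ℝ → Matrix (Fin d) (Fin d) ℂ} {s : Set ℝ}
    (h : ∀ i j, ContinuousOn (fun t => ρ t i j) s) : ContinuousOn (fun t => toLiouville (ρ t)) s :=
  (PiLp.continuousLinearEquiv 2 ℝ (fun _ : Fin d × Fin d => ℂ)).symm.continuous.comp_continuousOn
    (continuousOn_pi.2 fun p => h p.1 p.2)

theorem Matrix.IsHermitian.im_hsInner {A B : Matrix (Fin d) (Fin d) ℂ} (hA : A.IsHermitian)
    (hB : B.IsHermitian) : (hsInner A B).im = 0 := by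
  rw [← Complex.conj_eq_iff_im, hsInner, ← Complex.star_def, ← trace_conjTranspose,
    conjTranspose_mul, conjTranspose_conjTranspose, hA.eq, hB.eq, trace_mul_comm]

theorem Matrix.IsHermitian.inv_hsNorm_smul {A : Matrix (Fin d) (Fin d) ℂ}
    (B : Matrix (Fin d) (Fin d) ℂ) (hA : A.IsHermitian) : ((hsNorm B : ℂ)⁻¹ • A).IsHermitian :=
  hA.smul (by simp [IsSelfAdjoint, Complex.conj_ofReal])

theorem Matrix.IsHermitian.hsNormalize {A : Matrix (Fin d) (Fin d) ℂ} (hA : A.IsHermitian) :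
    (hsNormalize A).IsHermitian :=
  hA.inv_hsNorm_smul A

theorem Matrix.IsHermitian.of_hasDerivWithinAt {ρ : ℝ → Matrix (Fin d) (Fin d) ℂ}
    {ρ' : Matrix (Fin d) (Fin d) ℂ} {s : Set ℝ} {t : ℝ} (hs : UniqueDiffWithinAt ℝ s t)
    (ht : t ∈ s) (hρ : ∀ x ∈ s, (ρ x).IsHermitian)
    (h : ∀ i j, HasDerivWithinAt (fun x => ρ x i j) (ρ' i j) s t) : ρ'.IsHermitian := by
  ext i j
  exact hs.eq_deriv s
    ((h j i).star.congr (fun x hx => ((hρ x hx).apply i j).symm) ((hρ t ht).apply i j).symm)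
    (h i j)

theorem trace_mul_re_eq_real_inner {A B : Matrix (Fin d) (Fin d) ℂ} (hA : A.IsHermitian) :
    (A * B).trace.re = ⟪toLiouville A, toLiouville B⟫_ℝ := by
  rw [real_inner_toLiouville, hsInner, hA.eq]

theorem fluct_eq_sqrt_real_inner {L : Matrix (Fin d) (Fin d) ℂ → Matrix (Fin d) (Fin d) ℂ}
    {ψ : Matrix (Fin d) (Fin d) ℂ} (hψ : ψ.IsHermitian) (hLψ : (L ψ).IsHermitian) :
    fluct L ψ = √(‖toLiouville (L ψ)‖ ^ 2 - ⟪toLiouville ψ, toLiouville (L ψ)⟫_ℝ ^ 2) := by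
  rw [fluct, norm_toLiouville, real_inner_toLiouville, ← sq_abs (hsInner ψ (L ψ)).re,
    Complex.abs_re_eq_norm.2 (hψ.im_hsInner hLψ)]

end Liouville

theorem liouville_angle_qsl {d : ℕ} (T : ℝ) (hT : 0 < T)
    (ρ ρ' : ℝ → Matrix (Fin d) (Fin d) ℂ)
    (L : ℝ → Matrix (Fin d) (Fin d) ℂ → Matrix (Fin d) (Fin d) ℂ)
    (hLlin : ∀ t, IsLinearMap ℂ (L t))
    (hne : ∀ t ∈ Set.Icc 0 T, ρ t ≠ 0)
    (hpsd : ∀ t ∈ Set.Icc 0 T, (ρ t).PosSemidef)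
    (hderiv : ∀ t ∈ Set.Icc 0 T, ∀ i j, HasDerivAt (fun s => ρ s i j) (ρ' t i j) t)
    (hcont : ∀ i j, ContinuousOn (fun t => ρ' t i j) (Set.Icc 0 T))
    (heq : ∀ t ∈ Set.Icc 0 T, ρ' t = L t (ρ t)) :
    Real.arccos (((hsNormalize (ρ 0)) * (hsNormalize (ρ T))).trace.re) ≤
      ∫ t in (0:ℝ)..T, fluct (L t) (hsNormalize (ρ t)) := by
  have hherm : ∀ t ∈ Icc 0 T, (ρ t).IsHermitian := fun t ht => (hpsd t ht).isHermitian
  have hLρ : ∀ t ∈ Icc 0 T, L t (hsNormalize (ρ t)) = (hsNorm (ρ t) : ℂ)⁻¹ • ρ' t :=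
    fun t ht => by rw [hsNormalize, (hLlin t).map_smul, heq t ht]
  have hLρ_herm : ∀ t ∈ Icc 0 T, (L t (hsNormalize (ρ t))).IsHermitian := fun t ht =>
    hLρ t ht ▸ (IsHermitian.of_hasDerivWithinAt (uniqueDiffOn_Icc hT t ht) ht hherm
      fun i j => (hderiv t ht i j).hasDerivWithinAt).inv_hsNorm_smul _
  have hr : ∀ t ∈ Icc 0 T, HasDerivAt (fun s => toLiouville (ρ s)) (toLiouville (ρ' t)) t :=
    fun t ht => hasDerivAt_toLiouville (hderiv t ht)
  calc arccos ((hsNormalize (ρ 0) * hsNormalize (ρ T)).trace.re)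
      = arccos ⟪‖toLiouville (ρ 0)‖⁻¹ • toLiouville (ρ 0),
          ‖toLiouville (ρ T)‖⁻¹ • toLiouville (ρ T)⟫_ℝ := by
        rw [trace_mul_re_eq_real_inner (hherm 0 (left_mem_Icc.2 hT.le)).hsNormalize,
          toLiouville_hsNormalize, toLiouville_hsNormalize]
    _ ≤ _ := arccos_inner_normalize_le_integral (r := fun t => toLiouville (ρ t))
        (r' := fun t => toLiouville (ρ' t)) hT.le
        (fun t ht => toLiouville_eq_zero_iff.not.2 (hne t ht))
        (fun t ht => (hr t ht).continuousAt.continuousWithinAt)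
        (fun t ht => hr t (Ioo_subset_Icc_self ht)) (continuousOn_toLiouville hcont)
    _ = ∫ t in (0:ℝ)..T, fluct (L t) (hsNormalize (ρ t)) := by
        refine intervalIntegral.integral_congr fun t ht => ?_
        rw [uIcc_of_le hT.le] at ht
        rw [fluct_eq_sqrt_real_inner (hherm t ht).hsNormalize (hLρ_herm t ht), hLρ t ht,
          toLiouville_hsNormalize, toLiouville_inv_hsNorm_smul]
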